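/- arXiv:2501.14219 — 2 statements merged into one kernel-verified Lean document; each statement's English description precedes it below -/
import Mathlib

section
/- In the bullet process, the sequence of velocities of the surviving bullets, listed in order of increasing firing index, is non-increasing. -/
open MeasureTheory ProbabilityTheory Filter Set

noncomputable section

namespace BulletProcess

/-- Firing time of bullet `i`: `t_i = Δ_1 + ⋯ + Δ_i` (the delay `Δ_0` plays no role). -/
def fireTime (Δ : ℕ → ℝ) (i : ℕ) : ℝ := ∑ j ∈ Finset.Icc 1 i, Δ j

/-- Virtual position of bullet `i` at time `t`. -/
def pos (v Δ : ℕ → ℝ) (i : ℕ) (t : ℝ) : ℝ := v i * (t - fireTime Δ i)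

/-- No three bullets are ever simultaneously at the same position. -/
def NoTriple (v Δ : ℕ → ℝ) : Prop :=
  ∀ t : ℝ, ∀ i j k : ℕ, i ≠ j → j ≠ k → i ≠ k →
    fireTime Δ i ≤ t → fireTime Δ j ≤ t → fireTime Δ k ≤ t →
    ¬(pos v Δ i t = pos v Δ j t ∧ pos v Δ j t = pos v Δ k t)

/-- A consistent annihilation structure for the bullet process on the bullets indexed by `I`:
`partner i = some j` means bullets `i` and `j` mutually annihilate (at time `deathTime i`),
`partner i = none` means bullet `i` survives forever.  The axioms say that matched pairs
really collide (the later bullet is faster and catches the earlier one at their common death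
time), and that two bullets that are both fired and still alive never occupy the same
position. -/
structure Dynamics (v Δ : ℕ → ℝ) (I : Set ℕ) where
  partner : ℕ → Option ℕ
  deathTime : ℕ → ℝ
  partner_mem : ∀ i j, i ∈ I → partner i = some j → j ∈ I
  partner_symm : ∀ i j, i ∈ I → j ∈ I → (partner i = some j ↔ partner j = some i)
  partner_ne : ∀ i, i ∈ I → partner i ≠ some i
  death_symm : ∀ i j, i ∈ I → partner i = some j → deathTime j = deathTime i
  collide : ∀ i j, i ∈ I → i < j → partner i = some j →
    v i < v j ∧ fireTime Δ j ≤ deathTime i ∧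
      pos v Δ i (deathTime i) = pos v Δ j (deathTime i)
  no_crossing : ∀ i j, i ∈ I → j ∈ I → i ≠ j → ∀ t : ℝ,
    fireTime Δ i ≤ t → fireTime Δ j ≤ t →
    (partner i = none ∨ t < deathTime i) →
    (partner j = none ∨ t < deathTime j) →
    pos v Δ i t ≠ pos v Δ j t

namespace Dynamics

variable {v Δ : ℕ → ℝ} {I : Set ℕ}

/-- Bullet `i` survives (is never annihilated). -/
def survives (d : Dynamics v Δ I) (i : ℕ) : Prop := d.partner i = none

/-- The set of surviving bullets. -/
def surv (d : Dynamics v Δ I) : Set ℕ := {i | i ∈ I ∧ d.survives i}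

/-- `d.annihilates j i` : the later bullet `j` catches up to and annihilates `i`. -/
def annihilates (d : Dynamics v Δ I) (j i : ℕ) : Prop := i < j ∧ d.partner i = some j

end Dynamics

/-- The probabilistic bullet process on the probability space `(Ω, P)`: i.i.d. velocities with
law `μ` and i.i.d. delays with law `ν` (all independent, and all strictly positive), together
with a choice of dynamics for every admissible deterministic configuration and every index set
of bullets. -/
structure Setup (Ω : Type) [MeasurableSpace Ω] (P : Measure Ω) (μ ν : Measure ℝ) where
  V : ℕ → Ω → ℝ
  D : ℕ → Ω → ℝ
  Vpos : ∀ i ω, 0 < V i ω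
  Dpos : ∀ i ω, 0 < D i ω
  measV : ∀ i, Measurable (V i)
  measD : ∀ i, Measurable (D i)
  lawV : ∀ i, P.map (V i) = μ
  lawD : ∀ i, P.map (D i) = ν
  indep : iIndepFun (Sum.elim V D) P
  dyn : ∀ (v Δ : ℕ → ℝ), 0 ≤ v 0 → (∀ i, i ≠ 0 → 0 < v i) → (∀ i, 0 < Δ i) →
    ∀ (I : Set ℕ), Dynamics v Δ I

namespace Setup

variable {Ω : Type} [MeasurableSpace Ω] {P : Measure Ω} {μ ν : Measure ℝ}
variable (B : Setup Ω P μ ν)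

/-- The realized sequence of velocities. -/
def vseq (ω : Ω) : ℕ → ℝ := fun i => B.V i ω

/-- The realized sequence of delays. -/
def dseq (ω : Ω) : ℕ → ℝ := fun i => B.D i ω

/-- Validity of the pair `(μ, ν)`: almost surely there are no triple collisions. -/
def valid : Prop := ∀ᵐ ω ∂P, NoTriple (B.vseq ω) (B.dseq ω)

/-- The dynamics of the bullet process on the bullets indexed by `I`. -/
def dynOn (ω : Ω) (I : Set ℕ) : Dynamics (B.vseq ω) (B.dseq ω) I :=
  B.dyn _ _ (le_of_lt (B.Vpos 0 ω)) (fun i _ => B.Vpos i ω) (fun i => B.Dpos i ω) I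

/-- `S`, the survivor set of the full process. -/
def survSet (ω : Ω) : Set ℕ := (B.dynOn ω Set.univ).surv

/-- `S_n`, the survivor set of the truncated process on bullets `b_0, …, b_n`. -/
def truncS (ω : Ω) (n : ℕ) : Set ℕ := (B.dynOn ω (Set.Iic n)).surv

/-- `b_n` is a potential survivor: it survives in the process on `b_0, …, b_n`. -/
def potSurv (ω : Ω) (n : ℕ) : Prop := (B.dynOn ω (Set.Iic n)).survives n

/-- The dynamics when the velocity of `b_0` is fixed to `v` (junk value `max v 0` if `v < 0`). -/
def dyn0 (vel : ℝ) (ω : Ω) (I : Set ℕ) :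
    Dynamics (Function.update (B.vseq ω) 0 (max vel 0)) (B.dseq ω) I :=
  B.dyn _ _ (by simp) (fun i hi => by
      rw [Function.update_of_ne hi]; exact B.Vpos i ω)
    (fun i => B.Dpos i ω) I

/-- The event that the first bullet, with velocity fixed to `v`, survives forever. -/
def survEvent (vel : ℝ) : Set Ω := {ω | (B.dyn0 vel ω Set.univ).survives 0}

/-- `θ(v)`: the probability that the first bullet survives when its velocity is fixed to `v`. -/
def theta (vel : ℝ) : ℝ := (P (B.survEvent vel)).toReal

/-- The critical velocity `v_c = inf {v ≥ 0 : θ(v) > 0}` (equal to `⊤` if no speed is fast). -/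
def vc : EReal :=
  sInf {x : EReal | ∃ vel : ℝ, 0 ≤ vel ∧ 0 < B.theta vel ∧ x = (vel : EReal)}

end Setup

end BulletProcess

namespace BulletProcess

variable {Ω : Type} [MeasurableSpace Ω] {P : MeasureTheory.Measure Ω}
  [MeasureTheory.IsProbabilityMeasure P] {μ ν : MeasureTheory.Measure ℝ}
  [MeasureTheory.IsProbabilityMeasure μ] [MeasureTheory.IsProbabilityMeasure ν]

lemma fireTime_mono {Δ : ℕ → ℝ} (hΔ : ∀ i, 0 ≤ Δ i) : Monotone (fireTime Δ) :=
  fun _ _ hij => Finset.sum_le_sum_of_subset_of_nonneg (Finset.Icc_subset_Icc le_rfl hij)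
    fun k _ _ => hΔ k

/-- The meeting time is `t_j + v_i (t_j - t_i) / (v_j - v_i)`. -/
lemma exists_pos_eq_of_lt {v Δ : ℕ → ℝ} {i j : ℕ} (hvi : 0 ≤ v i) (hvij : v i < v j)
    (hfire : fireTime Δ i ≤ fireTime Δ j) :
    ∃ t, fireTime Δ j ≤ t ∧ pos v Δ i t = pos v Δ j t := by
  have hgap : 0 < v j - v i := sub_pos.mpr hvij
  refine ⟨fireTime Δ j + v i * (fireTime Δ j - fireTime Δ i) / (v j - v i), ?_, ?_⟩
  · exact le_add_of_nonneg_right <| div_nonneg (mul_nonneg hvi (sub_nonneg.mpr hfire)) hgap.le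
  · simp only [pos]
    field_simp
    ring

namespace Dynamics

variable {v Δ : ℕ → ℝ} {I : Set ℕ}

lemma pos_ne_of_mem_surv (d : Dynamics v Δ I) {i j : ℕ} (hi : i ∈ d.surv) (hj : j ∈ d.surv)
    (hij : i ≠ j) {t : ℝ} (hti : fireTime Δ i ≤ t) (htj : fireTime Δ j ≤ t) :
    pos v Δ i t ≠ pos v Δ j t :=
  d.no_crossing i j hi.1 hj.1 hij t hti htj (.inl hi.2) (.inl hj.2)

end Dynamics

theorem survivor_velocities_antitone_general (v Δ : ℕ → ℝ) (hv : ∀ i, 0 < v i) (hΔ : ∀ i, 0 < Δ i)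
    (d : Dynamics v Δ Set.univ)
    (i j : ℕ) (hij : i < j) (hi : i ∈ d.surv) (hj : j ∈ d.surv) : v j ≤ v i := by
  by_contra! hvij
  have hfire : fireTime Δ i ≤ fireTime Δ j := fireTime_mono (fun k => (hΔ k).le) hij.le
  obtain ⟨t, htj, hmeet⟩ := exists_pos_eq_of_lt (hv i).le hvij hfire
  exact d.pos_ne_of_mem_surv hi hj hij.ne (hfire.trans htj) htj hmeet

/-- The velocities of the surviving bullets, in order of increasing firing index, are
non-increasing. -/
theorem survivor_velocities_antitone (v Δ : ℕ → ℝ) (hv : ∀ i, 0 < v i) (hΔ : ∀ i, 0 < Δ i)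
    (htriple : NoTriple v Δ) (d : Dynamics v Δ Set.univ)
    (i j : ℕ) (hij : i < j) (hi : i ∈ d.surv) (hj : j ∈ d.surv) : v j ≤ v i :=
  survivor_velocities_antitone_general v Δ hv hΔ d i j hij hi hj

end BulletProcess
end
end

section
/- In the bullet process, if the full survivor set S is finite, then almost surely S_n = S for infinitely many n, where S_n is the survivor set of the truncated process on bullets (b_0,…,b_n). Consequently liminf_n |S_n| ≤ |S| on the event that S is finite. -/
open MeasureTheory ProbabilityTheory Filter Set

noncomputable section

namespace BulletProcess

variable {Ω : Type} [MeasurableSpace Ω] {P : MeasureTheory.Measure Ω}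
  [MeasureTheory.IsProbabilityMeasure P] {μ ν : MeasureTheory.Measure ℝ}
  [MeasureTheory.IsProbabilityMeasure μ] [MeasureTheory.IsProbabilityMeasure ν]

/-!
If no three bullets ever meet, the annihilation pattern on a finite set of bullets is forced:
at the first time two admissible dynamics disagree, some pair collides in one of them but not in
the other, and in the other one the two bullets are either both alive at the collision point or
one of them dies there with a third bullet, i.e. a triple meeting.

Matched pairs of the full process never interleave: `a < c < b < e` with `a ~ b` and `c ~ e`
forces a triple meeting at the earlier of the two collisions, because a later bullet cannot
overtake an earlier one while both are alive. Hence for arbitrarily large `n` no bullet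
`≤ n` is matched beyond `n`, and for such `n ≥ max S` the truncated dynamics on `b_0, …, b_n` is
the restriction of the full one, so `S_n = S`.
-/

section Deterministic

variable {v Δ : ℕ → ℝ} {I J : Set ℕ}

lemma fireTime_strictMono (hΔ : ∀ i, 0 < Δ i) : StrictMono (fireTime Δ) :=
  strictMono_nat_of_lt_succ fun n => by
    rw [fireTime, fireTime, Finset.sum_Icc_succ_top (by omega)]
    exact lt_add_of_pos_right _ (hΔ _)

namespace Dynamics

def lifetime (d : Dynamics v Δ I) (i : ℕ) : WithTop ℝ :=
  if d.partner i = none then ⊤ else d.deathTime i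

lemma lifetime_of_partner_eq_some (d : Dynamics v Δ I) {i j : ℕ} (h : d.partner i = some j) :
    d.lifetime i = d.deathTime i := by
  simp [lifetime, h]

lemma lifetime_eq_top_iff (d : Dynamics v Δ I) {i : ℕ} :
    d.lifetime i = ⊤ ↔ d.partner i = none := by
  unfold lifetime
  split_ifs with h <;> simp [h]

lemma coe_lt_lifetime_iff (d : Dynamics v Δ I) {i : ℕ} {t : ℝ} :
    (t : WithTop ℝ) < d.lifetime i ↔ d.partner i = none ∨ t < d.deathTime i := by
  unfold lifetime
  split_ifs with h <;> simp [h]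

lemma pos_ne_pos (d : Dynamics v Δ I) {i j : ℕ} (hi : i ∈ I) (hj : j ∈ I) (hij : i ≠ j)
    {t : ℝ} (hfi : fireTime Δ i ≤ t) (hfj : fireTime Δ j ≤ t)
    (hti : (t : WithTop ℝ) < d.lifetime i) (htj : (t : WithTop ℝ) < d.lifetime j) :
    pos v Δ i t ≠ pos v Δ j t :=
  d.no_crossing i j hi hj hij t hfi hfj (d.coe_lt_lifetime_iff.1 hti)
    (d.coe_lt_lifetime_iff.1 htj)

lemma meet_at_deathTime (hΔ : ∀ i, 0 < Δ i) (d : Dynamics v Δ I) {a b : ℕ} (ha : a ∈ I)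
    (hab : d.partner a = some b) :
    fireTime Δ a ≤ d.deathTime a ∧ fireTime Δ b ≤ d.deathTime a ∧
      pos v Δ a (d.deathTime a) = pos v Δ b (d.deathTime a) := by
  have hb : b ∈ I := d.partner_mem a b ha hab
  have hne : a ≠ b := by rintro rfl; exact d.partner_ne a ha hab
  rcases hne.lt_or_gt with h | h
  · obtain ⟨-, hfb, hpos⟩ := d.collide a b ha h hab
    exact ⟨((fireTime_strictMono hΔ).monotone h.le).trans hfb, hfb, hpos⟩
  · obtain ⟨-, hfa, hpos⟩ := d.collide b a hb h ((d.partner_symm a b ha hb).1 hab)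
    rw [d.death_symm a b ha hab] at hfa hpos
    exact ⟨hfa, ((fireTime_strictMono hΔ).monotone h.le).trans hfa, hpos.symm⟩

lemma eq_partner_of_pos_eq (hΔ : ∀ i, 0 < Δ i) (hnt : NoTriple v Δ) (d : Dynamics v Δ I)
    {x c y : ℕ} (hx : x ∈ I) (hxc : d.partner x = some c) (hy : fireTime Δ y ≤ d.deathTime x)
    (hyx : y ≠ x) (hpos : pos v Δ y (d.deathTime x) = pos v Δ x (d.deathTime x)) : y = c := by
  obtain ⟨hfx, hfc, hposc⟩ := d.meet_at_deathTime hΔ hx hxc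
  by_contra hyc
  exact hnt _ y x c hyx (fun h => d.partner_ne x hx (h ▸ hxc)) hyc hy hfx hfc ⟨hpos, hposc⟩

lemma pos_le_pos_of_lt (hv : ∀ i, 0 < v i) (hΔ : ∀ i, 0 < Δ i) (d : Dynamics v Δ I)
    {i j : ℕ} (hi : i ∈ I) (hj : j ∈ I) (hij : i < j) {t : ℝ} (hfj : fireTime Δ j ≤ t)
    (hti : (t : WithTop ℝ) ≤ d.lifetime i) (htj : (t : WithTop ℝ) ≤ d.lifetime j) :
    pos v Δ j t ≤ pos v Δ i t := by
  by_contra! hlt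
  have hfi : fireTime Δ i < fireTime Δ j := fireTime_strictMono hΔ hij
  have h0 : pos v Δ j (fireTime Δ j) < pos v Δ i (fireTime Δ j) := by
    rw [pos, sub_self, mul_zero]
    exact mul_pos (hv i) (sub_pos.2 hfi)
  obtain ⟨u, ⟨hju, hut⟩, hu⟩ := intermediate_value_Icc' hfj
    (f := fun u => pos v Δ i u - pos v Δ j u) (by unfold pos; fun_prop)
    ⟨(sub_neg.2 hlt).le, (sub_pos.2 h0).le⟩
  have hut' : u < t := hut.lt_of_ne fun h => by subst h; simp only at hu; linarith
  have hlive : ∀ k, (t : WithTop ℝ) ≤ d.lifetime k → (u : WithTop ℝ) < d.lifetime k :=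
    fun k hk => (WithTop.coe_lt_coe.2 hut').trans_le hk
  exact d.pos_ne_pos hi hj hij.ne (hfi.le.trans hju) hju (hlive i hti) (hlive j htj)
    (sub_eq_zero.1 hu)

lemma lifetime_eq_of_partner_eq_some (d : Dynamics v Δ I) {a b : ℕ} (ha : a ∈ I)
    (hab : d.partner a = some b) : d.lifetime b = d.lifetime a := by
  have hb : b ∈ I := d.partner_mem a b ha hab
  rw [d.lifetime_of_partner_eq_some hab,
    d.lifetime_of_partner_eq_some ((d.partner_symm a b ha hb).1 hab), d.death_symm a b ha hab]

lemma not_interleaved (hv : ∀ i, 0 < v i) (hΔ : ∀ i, 0 < Δ i) (hnt : NoTriple v Δ)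
    (d : Dynamics v Δ I) {a c b e : ℕ} (ha : a ∈ I) (hc : c ∈ I)
    (hac : a < c) (hcb : c < b) (hbe : b < e)
    (hab : d.partner a = some b) (hce : d.partner c = some e) : False := by
  have hb : b ∈ I := d.partner_mem a b ha hab
  have he : e ∈ I := d.partner_mem c e hc hce
  obtain ⟨-, hfb, hpab⟩ := d.meet_at_deathTime hΔ ha hab
  obtain ⟨-, hfe, hpce⟩ := d.meet_at_deathTime hΔ hc hce
  have hla := d.lifetime_of_partner_eq_some hab
  have hlc := d.lifetime_of_partner_eq_some hce
  have hlb := d.lifetime_eq_of_partner_eq_some ha hab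
  have hle := d.lifetime_eq_of_partner_eq_some hc hce
  rcases le_or_gt (d.deathTime a) (d.deathTime c) with h | h
  · have hfc : fireTime Δ c ≤ d.deathTime a := (fireTime_strictMono hΔ hcb).le.trans hfb
    have hca := d.pos_le_pos_of_lt hv hΔ ha hc hac hfc hla.ge (by rw [hlc]; exact_mod_cast h)
    have hbc := d.pos_le_pos_of_lt hv hΔ hc hb hcb hfb (by rw [hlc]; exact_mod_cast h)
      (by rw [hlb, hla])
    exact hcb.ne (d.eq_partner_of_pos_eq hΔ hnt ha hab hfc hac.ne' (by linarith))
  · have hfb' : fireTime Δ b ≤ d.deathTime c := (fireTime_strictMono hΔ hbe).le.trans hfe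
    have hbc := d.pos_le_pos_of_lt hv hΔ hc hb hcb hfb' hlc.ge
      (by rw [hlb, hla]; exact_mod_cast h.le)
    have heb := d.pos_le_pos_of_lt hv hΔ hb he hbe hfe (by rw [hlb, hla]; exact_mod_cast h.le)
      (by rw [hle, hlc])
    exact hbe.ne (d.eq_partner_of_pos_eq hΔ hnt hc hce hfb' hcb.ne' (by linarith))

lemma partner_eq_of_lifetime_le (hΔ : ∀ i, 0 < Δ i) (hnt : NoTriple v Δ)
    (d d' : Dynamics v Δ I) {a : ℕ} (ha : a ∈ I)
    (hmin : ∀ x ∈ I, d.partner x ≠ d'.partner x → d.lifetime a ≤ d'.lifetime x) :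
    d.partner a = d'.partner a := by
  by_contra hne
  rcases hab : d.partner a with _ | b
  · have htop : d'.lifetime a = ⊤ := top_le_iff.1 (d.lifetime_eq_top_iff.2 hab ▸ hmin a ha hne)
    exact hne (hab.trans (d'.lifetime_eq_top_iff.1 htop).symm)
  set t := d.deathTime a
  have hb : b ∈ I := d.partner_mem a b ha hab
  have hba : d.partner b = some a := (d.partner_symm a b ha hb).1 hab
  have hnab : d'.partner a ≠ some b := fun h => hne (hab.trans h.symm)
  obtain ⟨hfa, hfb, hpos⟩ := d.meet_at_deathTime hΔ ha hab
  -- If `d'` killed `x` exactly at time `t`, then `x`, `y` and the killer would meet.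
  have hlive : ∀ x y, x ∈ I → y ≠ x → fireTime Δ y ≤ t → pos v Δ y t = pos v Δ x t →
      d'.partner x ≠ some y → d.partner x ≠ d'.partner x → (t : WithTop ℝ) < d'.lifetime x := by
    intro x y hx hyx hfy hpy hxy hdis
    have hle : (t : WithTop ℝ) ≤ d'.lifetime x := d.lifetime_of_partner_eq_some hab ▸ hmin x hx hdis
    refine hle.lt_of_ne fun heq => ?_
    obtain ⟨c, hc⟩ := Option.ne_none_iff_exists'.1 fun h =>
      WithTop.coe_ne_top (heq.trans (d'.lifetime_eq_top_iff.2 h))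
    have hdt : d'.deathTime x = t :=
      (WithTop.coe_inj.1 (heq.trans (d'.lifetime_of_partner_eq_some hc))).symm
    obtain rfl := d'.eq_partner_of_pos_eq hΔ hnt hx hc (hdt ▸ hfy) hyx (hdt ▸ hpy)
    exact hxy hc
  have hab_ne : a ≠ b := by rintro rfl; exact d.partner_ne a ha hab
  have hnba : d'.partner b ≠ some a := fun h => hnab ((d'.partner_symm b a hb ha).1 h)
  exact d'.pos_ne_pos ha hb hab_ne hfa hfb (hlive a b ha hab_ne.symm hfb hpos.symm hnab hne)
    (hlive b a hb hab_ne hfa hpos hnba fun h => hnba (h.symm.trans hba)) hpos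

lemma partner_eq_of_finite (hΔ : ∀ i, 0 < Δ i) (hnt : NoTriple v Δ) (hI : I.Finite)
    (d d' : Dynamics v Δ I) {a : ℕ} (ha : a ∈ I) : d.partner a = d'.partner a := by
  by_contra hne
  obtain ⟨x, ⟨hx, hxne⟩, hmin⟩ := Set.exists_min_image {x | x ∈ I ∧ d.partner x ≠ d'.partner x}
    (fun x => min (d.lifetime x) (d'.lifetime x)) (hI.subset fun x hx => hx.1) ⟨a, ha, hne⟩
  rcases min_choice (d.lifetime x) (d'.lifetime x) with h | h
  · exact hxne <| partner_eq_of_lifetime_le hΔ hnt d d' hx fun y hy hyne =>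
      h ▸ (hmin y ⟨hy, hyne⟩).trans (min_le_right _ _)
  · exact hxne <| (partner_eq_of_lifetime_le hΔ hnt d' d hx fun y hy hyne =>
      h ▸ (hmin y ⟨hy, Ne.symm hyne⟩).trans (min_le_left _ _)).symm

def PartnerClosed (d : Dynamics v Δ J) (I : Set ℕ) : Prop :=
  ∀ i j, i ∈ I → d.partner i = some j → j ∈ I

def restrict (d : Dynamics v Δ J) (hIJ : I ⊆ J) (hcl : d.PartnerClosed I) : Dynamics v Δ I where
  partner := d.partner
  deathTime := d.deathTime
  partner_mem := hcl
  partner_symm i j hi hj := d.partner_symm i j (hIJ hi) (hIJ hj)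
  partner_ne i hi := d.partner_ne i (hIJ hi)
  death_symm i j hi := d.death_symm i j (hIJ hi)
  collide i j hi := d.collide i j (hIJ hi)
  no_crossing i j hi hj := d.no_crossing i j (hIJ hi) (hIJ hj)

lemma surv_eq_of_partnerClosed (hΔ : ∀ i, 0 < Δ i) (hnt : NoTriple v Δ) (hI : I.Finite)
    (hIJ : I ⊆ J) (d : Dynamics v Δ J) (d' : Dynamics v Δ I) (hcl : d.PartnerClosed I)
    (hS : d.surv ⊆ I) : d'.surv = d.surv := by
  have h : ∀ i ∈ I, d'.partner i = d.partner i := fun i hi =>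
    partner_eq_of_finite hΔ hnt hI d' (d.restrict hIJ hcl) hi
  ext i
  constructor
  · rintro ⟨hi, hs⟩
    exact ⟨hIJ hi, (h i hi).symm.trans hs⟩
  · intro hs
    exact ⟨hS hs, (h i (hS hs)).trans hs.2⟩

lemma frequently_partnerClosed_Iic (hv : ∀ i, 0 < v i) (hΔ : ∀ i, 0 < Δ i)
    (hnt : NoTriple v Δ) (d : Dynamics v Δ univ) :
    ∃ᶠ n in atTop, d.PartnerClosed (Iic n) := by
  rw [frequently_atTop]
  intro n₀
  set g : ℕ → ℕ := fun i => (d.partner i).getD 0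
  obtain ⟨i, hi, hgi⟩ := (Finset.range (n₀ + 1)).exists_max_image g ⟨0, by simp⟩
  rw [Finset.mem_range] at hi
  refine ⟨max n₀ (g i), le_max_left _ _, fun k j hk hkj => ?_⟩
  rw [mem_Iic] at hk ⊢
  by_cases hkn : k ≤ n₀
  · have hgk : g k ≤ g i := hgi k (Finset.mem_range.2 (by omega))
    simp only [g, hkj, Option.getD_some] at hgk
    exact hgk.trans (le_max_right _ _)
  obtain ⟨N, hN⟩ : ∃ N, d.partner i = some N := Option.ne_none_iff_exists'.1 fun h => by
    simp only [g, h, Option.getD_none] at hk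
    omega
  simp only [g, hN, Option.getD_some] at hk ⊢
  rcases (show k ≤ N by omega).lt_or_eq with hkN | rfl
  · by_contra hj
    exact d.not_interleaved hv hΔ hnt trivial trivial (by omega) hkN (by omega) hN hkj
  · have := hkj.symm.trans ((d.partner_symm i k trivial trivial).1 hN)
    rw [Option.some_inj] at this
    omega

end Dynamics

end Deterministic

/-- If the full survivor set `S` is finite, then almost surely `S_n = S` for infinitely
many `n`; consequently `liminf_n |S_n| ≤ |S|` on the event that `S` is finite. -/
theorem truncS_eq_surv_frequently (B : Setup Ω P μ ν) (hvalid : B.valid) :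
    ∀ᵐ ω ∂P, (B.survSet ω).Finite →
      (∃ᶠ n in Filter.atTop, B.truncS ω n = B.survSet ω) ∧
        Filter.liminf (fun n => (B.truncS ω n).encard) Filter.atTop ≤
          (B.survSet ω).encard := by
  filter_upwards [hvalid] with ω hnt hS
  obtain ⟨m, hm⟩ := hS.bddAbove
  have hΔ : ∀ i, 0 < B.dseq ω i := fun i => B.Dpos i ω
  have hfreq : ∃ᶠ n in atTop, B.truncS ω n = B.survSet ω :=
    (((B.dynOn ω univ).frequently_partnerClosed_Iic (fun i => B.Vpos i ω) hΔ hnt).and_eventually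
      (eventually_ge_atTop m)).mono fun n ⟨hcl, hmn⟩ =>
        Dynamics.surv_eq_of_partnerClosed hΔ hnt (finite_Iic n) (subset_univ _) _ _ hcl
          fun s hs => (hm hs).trans hmn
  exact ⟨hfreq, liminf_le_of_frequently_le' (hfreq.mono fun n hn => by rw [hn])⟩

end BulletProcess
end
end
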